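/- Let 0 < p < 1 and α, β₁, β₂, β₃ > 0. Let V₁, V₂, V₃ be independent ℕ-valued random variables with P(Vᵢ ≤ x) = (1 − p^{(x+1)^α})^{βᵢ} for all x ∈ ℕ, and set X₁ = max{V₁, V₃}, X₂ = max{V₂, V₃}. Write F_EDW(x; β) = (1 − p^{(x+1)^α})^β and f_EDW(x; β) = (1 − p^{(x+1)^α})^β − (1 − p^{x^α})^β. Then for all x₁, x₂ ∈ ℕ the conditional CDF F(x₁ | X₂ = x₂) = P(X₁ ≤ x₁, X₂ = x₂) / P(X₂ = x₂) satisfies: (i) if x₁ < x₂, F(x₁ | X₂ = x₂) = F_EDW(x₁; β₁+β₃) f_EDW(x₂; β₂) / f_EDW(x₂; β₂+β₃); (ii) if x₂ < x₁, F(x₁ | X₂ = x₂) = F_EDW(x₁; β₁); (iii) if x₁ = x₂ = x, F(x₁ | X₂ = x₂) = [F_EDW(x; β₁+β₂+β₃) − F_EDW(x; β₁) F_EDW(x−1; β₂+β₃)] / f_EDW(x; β₂+β₃), where for x = 0 the term F_EDW(x−1; β₂+β₃) is interpreted as 0. -/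

import Mathlib

open MeasureTheory ProbabilityTheory

/-- The CDF of the exponentiated discrete Weibull distribution `EDW(α, p, β)`:
`F_EDW(x; α, p, β) = (1 - p^((x+1)^α))^β`. -/
noncomputable def edwCDF (α p β : ℝ) (x : ℕ) : ℝ :=
  (1 - p ^ (((x : ℝ) + 1) ^ α)) ^ β

/-- The PMF of the exponentiated discrete Weibull distribution `EDW(α, p, β)`:
`f_EDW(x; α, p, β) = (1 - p^((x+1)^α))^β - (1 - p^(x^α))^β`. -/
noncomputable def edwPMF (α p β : ℝ) (x : ℕ) : ℝ :=
  (1 - p ^ (((x : ℝ) + 1) ^ α)) ^ β - (1 - p ^ ((x : ℝ) ^ α)) ^ β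

/-!
EDW distribution functions multiply in the shape parameter, `F(x; β) F(x; γ) = F(x; β + γ)`, so by
independence `max (V₂, V₃)` has law `EDW(α, p, β₂ + β₃)`, even jointly with any event of `V₁`;
its point masses are differences of consecutive values of that CDF. If `x₁ < x₂` the event
`{X₁ ≤ x₁, X₂ = x₂}` is `{V₁ ≤ x₁, V₂ = x₂, V₃ ≤ x₁}`, and if `x₂ ≤ x₁` it is
`{V₁ ≤ x₁, max (V₂, V₃) = x₂}`; both probabilities are then products.
-/

section EDW

variable {α p b c : ℝ}

lemma one_sub_rpow_rpow_pos (hp0 : 0 ≤ p) (hp1 : p < 1) (x : ℕ) :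
    0 < 1 - p ^ (((x : ℝ) + 1) ^ α) := by
  have : p ^ (((x : ℝ) + 1) ^ α) < 1 :=
    Real.rpow_lt_one hp0 hp1 (Real.rpow_pos_of_pos (by positivity) α)
  linarith

lemma edwCDF_add (hp0 : 0 ≤ p) (hp1 : p < 1) (x : ℕ) :
    edwCDF α p (b + c) x = edwCDF α p b x * edwCDF α p c x :=
  Real.rpow_add (one_sub_rpow_rpow_pos hp0 hp1 x) b c

lemma edwPMF_zero (hα : 0 < α) (hb : b ≠ 0) : edwPMF α p b 0 = edwCDF α p b 0 := by
  simp [edwPMF, edwCDF, Real.zero_rpow hα.ne', Real.zero_rpow hb]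

lemma edwPMF_succ (k : ℕ) : edwPMF α p b (k + 1) = edwCDF α p b (k + 1) - edwCDF α p b k := by
  simp [edwPMF, edwCDF]

lemma edwPMF_pos (hp0 : 0 < p) (hp1 : p < 1) (hα : 0 < α) (hb : 0 < b) (x : ℕ) :
    0 < edwPMF α p b x := by
  have hexp : p ^ (((x : ℝ) + 1) ^ α) < p ^ ((x : ℝ) ^ α) :=
    Real.rpow_lt_rpow_of_exponent_gt hp0 hp1
      (Real.rpow_lt_rpow x.cast_nonneg (lt_add_one _) hα)
  have hbase : 0 ≤ 1 - p ^ ((x : ℝ) ^ α) := by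
    linarith [Real.rpow_le_one hp0.le hp1.le (Real.rpow_nonneg x.cast_nonneg α)]
  exact sub_pos.mpr (Real.rpow_lt_rpow hbase (by linarith) hb)

end EDW

section NatValued

variable {Ω : Type*} [MeasurableSpace Ω] {ν : Measure Ω} [IsFiniteMeasure ν] {W : Ω → ℕ}

lemma measureReal_preimage_singleton_succ (hW : Measurable W) (y : ℕ) :
    ν.real (W ⁻¹' {y + 1}) = ν.real (W ⁻¹' Set.Iic (y + 1)) - ν.real (W ⁻¹' Set.Iic y) := by
  have hdiff : W ⁻¹' {y + 1} = W ⁻¹' Set.Iic (y + 1) \ W ⁻¹' Set.Iic y := by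
    ext ω
    simp only [Set.mem_preimage, Set.mem_singleton_iff, Set.mem_sdiff, Set.mem_Iic]
    omega
  rw [hdiff, measureReal_sdiff (Set.preimage_mono (Set.Iic_subset_Iic.mpr y.le_succ))
    (hW measurableSet_Iic)]

lemma measureReal_preimage_singleton_eq_edwPMF {α p b c : ℝ} (hα : 0 < α) (hb : b ≠ 0)
    (hW : Measurable W) (hcdf : ∀ y : ℕ, ν.real (W ⁻¹' Set.Iic y) = c * edwCDF α p b y)
    (y : ℕ) : ν.real (W ⁻¹' {y}) = c * edwPMF α p b y := by
  cases y with
  | zero => rw [← show Set.Iic 0 = {0} from Set.Iic_bot, hcdf, edwPMF_zero hα hb]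
  | succ k => rw [measureReal_preimage_singleton_succ hW, hcdf, hcdf, edwPMF_succ, mul_sub]

end NatValued

lemma max_le_and_max_eq_iff_of_lt {L : Type*} [LinearOrder L] {a b c x y : L} (h : x < y) :
    max a c ≤ x ∧ max b c = y ↔ a ≤ x ∧ b = y ∧ c ≤ x := by
  simp only [max_le_iff, max_eq_iff]
  constructor
  · rintro ⟨⟨ha, hc⟩, ⟨hb, -⟩ | ⟨hc', -⟩⟩
    · exact ⟨ha, hb, hc⟩
    · exact absurd (hc'.symm ▸ hc) h.not_ge
  · rintro ⟨ha, hb, hc⟩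
    exact ⟨⟨ha, hc⟩, Or.inl ⟨hb, hb ▸ (hc.trans h.le)⟩⟩

lemma max_le_and_max_eq_iff_of_le {L : Type*} [LinearOrder L] {a b c x y : L} (h : y ≤ x) :
    max a c ≤ x ∧ max b c = y ↔ a ≤ x ∧ max b c = y :=
  ⟨fun ⟨hac, hbc⟩ => ⟨(le_max_left a c).trans hac, hbc⟩,
    fun ⟨ha, hbc⟩ => ⟨max_le ha ((le_max_right b c).trans (hbc.trans_le h)), hbc⟩⟩

lemma ProbabilityTheory.iIndepFun.measureReal_inter_preimage_three {Ω β : Type*}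
    [MeasurableSpace Ω] [MeasurableSpace β] {μ : Measure Ω} {f g h : Ω → β}
    (hind : iIndepFun ![f, g, h] μ)
    {A B C : Set β} (hA : MeasurableSet A) (hB : MeasurableSet B) (hC : MeasurableSet C) :
    μ.real (f ⁻¹' A ∩ g ⁻¹' B ∩ h ⁻¹' C) =
      μ.real (f ⁻¹' A) * μ.real (g ⁻¹' B) * μ.real (h ⁻¹' C) := by
  have hprod := hind.measure_inter_preimage_eq_mul Finset.univ (sets := ![A, B, C])
    (fun i _ => by fin_cases i <;> assumption)
  have hinter : (⋂ i ∈ Finset.univ, ![f, g, h] i ⁻¹' ![A, B, C] i) =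
      f ⁻¹' A ∩ g ⁻¹' B ∩ h ⁻¹' C := by
    ext ω
    simp [Fin.forall_fin_succ, and_assoc]
  rw [hinter, Fin.prod_univ_three] at hprod
  simp [Measure.real, hprod]

section BDEW

variable {Ω : Type*} [MeasurableSpace Ω] {μ : Measure Ω}
  {α p β₁ β₂ β₃ : ℝ} {V₁ V₂ V₃ : Ω → ℕ}

lemma measureReal_preimage_inter_max_le (hp0 : 0 ≤ p) (hp1 : p < 1)
    (hindep : iIndepFun ![V₁, V₂, V₃] μ)
    (hcdf₂ : ∀ x : ℕ, μ.real (V₂ ⁻¹' Set.Iic x) = edwCDF α p β₂ x)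
    (hcdf₃ : ∀ x : ℕ, μ.real (V₃ ⁻¹' Set.Iic x) = edwCDF α p β₃ x) (A : Set ℕ) (y : ℕ) :
    μ.real (V₁ ⁻¹' A ∩ {ω | max (V₂ ω) (V₃ ω) ≤ y}) =
      μ.real (V₁ ⁻¹' A) * edwCDF α p (β₂ + β₃) y := by
  have hset : V₁ ⁻¹' A ∩ {ω | max (V₂ ω) (V₃ ω) ≤ y} =
      V₁ ⁻¹' A ∩ V₂ ⁻¹' Set.Iic y ∩ V₃ ⁻¹' Set.Iic y := by
    ext ω
    simp [and_assoc]
  rw [hset, hindep.measureReal_inter_preimage_three (.of_discrete) (.of_discrete) (.of_discrete),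
    mul_assoc, edwCDF_add hp0 hp1, hcdf₂, hcdf₃]

lemma measureReal_preimage_inter_max_eq [IsFiniteMeasure μ] (hp0 : 0 ≤ p) (hp1 : p < 1)
    (hα : 0 < α) (hβ : β₂ + β₃ ≠ 0) (hm₂ : Measurable V₂) (hm₃ : Measurable V₃)
    (hindep : iIndepFun ![V₁, V₂, V₃] μ)
    (hcdf₂ : ∀ x : ℕ, μ.real (V₂ ⁻¹' Set.Iic x) = edwCDF α p β₂ x)
    (hcdf₃ : ∀ x : ℕ, μ.real (V₃ ⁻¹' Set.Iic x) = edwCDF α p β₃ x) (A : Set ℕ) (y : ℕ) :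
    μ.real (V₁ ⁻¹' A ∩ {ω | max (V₂ ω) (V₃ ω) = y}) =
      μ.real (V₁ ⁻¹' A) * edwPMF α p (β₂ + β₃) y := by
  have hmax : Measurable fun ω => max (V₂ ω) (V₃ ω) := hm₂.max hm₃
  rw [Set.inter_comm, ← measureReal_restrict_apply (measurableSet_eq_fun hmax measurable_const)]
  refine measureReal_preimage_singleton_eq_edwPMF hα hβ hmax (fun z => ?_) y
  rw [measureReal_restrict_apply (hmax measurableSet_Iic), Set.inter_comm]
  exact measureReal_preimage_inter_max_le hp0 hp1 hindep hcdf₂ hcdf₃ A z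

lemma measureReal_max_eq [IsProbabilityMeasure μ] (hp0 : 0 ≤ p) (hp1 : p < 1) (hα : 0 < α)
    (hβ : β₂ + β₃ ≠ 0) (hm₂ : Measurable V₂) (hm₃ : Measurable V₃)
    (hindep : iIndepFun ![V₁, V₂, V₃] μ)
    (hcdf₂ : ∀ x : ℕ, μ.real (V₂ ⁻¹' Set.Iic x) = edwCDF α p β₂ x)
    (hcdf₃ : ∀ x : ℕ, μ.real (V₃ ⁻¹' Set.Iic x) = edwCDF α p β₃ x) (y : ℕ) :
    μ.real {ω | max (V₂ ω) (V₃ ω) = y} = edwPMF α p (β₂ + β₃) y := by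
  simpa using measureReal_preimage_inter_max_eq hp0 hp1 hα hβ hm₂ hm₃ hindep hcdf₂ hcdf₃ .univ y

lemma measureReal_max_le_and_max_eq_of_lt [IsFiniteMeasure μ] (hp0 : 0 ≤ p) (hp1 : p < 1)
    (hα : 0 < α) (hβ₂ : β₂ ≠ 0) (hm₂ : Measurable V₂) (hindep : iIndepFun ![V₁, V₂, V₃] μ)
    (hcdf₁ : ∀ x : ℕ, μ.real (V₁ ⁻¹' Set.Iic x) = edwCDF α p β₁ x)
    (hcdf₂ : ∀ x : ℕ, μ.real (V₂ ⁻¹' Set.Iic x) = edwCDF α p β₂ x)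
    (hcdf₃ : ∀ x : ℕ, μ.real (V₃ ⁻¹' Set.Iic x) = edwCDF α p β₃ x) {x₁ x₂ : ℕ} (h : x₁ < x₂) :
    μ.real {ω | max (V₁ ω) (V₃ ω) ≤ x₁ ∧ max (V₂ ω) (V₃ ω) = x₂} =
      edwCDF α p (β₁ + β₃) x₁ * edwPMF α p β₂ x₂ := by
  have hpmf₂ : μ.real (V₂ ⁻¹' {x₂}) = edwPMF α p β₂ x₂ := by
    simpa using measureReal_preimage_singleton_eq_edwPMF (c := 1) hα hβ₂ hm₂ (by simpa) x₂
  have hset : {ω | max (V₁ ω) (V₃ ω) ≤ x₁ ∧ max (V₂ ω) (V₃ ω) = x₂} =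
      V₁ ⁻¹' Set.Iic x₁ ∩ V₂ ⁻¹' {x₂} ∩ V₃ ⁻¹' Set.Iic x₁ :=
    Set.ext fun ω => (max_le_and_max_eq_iff_of_lt h).trans and_assoc.symm
  rw [hset, hindep.measureReal_inter_preimage_three (.of_discrete) (.of_discrete) (.of_discrete),
    hcdf₁, hpmf₂, hcdf₃, edwCDF_add hp0 hp1]
  ring

lemma measureReal_max_le_and_max_eq_of_le [IsFiniteMeasure μ] (hp0 : 0 ≤ p) (hp1 : p < 1)
    (hα : 0 < α) (hβ : β₂ + β₃ ≠ 0) (hm₂ : Measurable V₂) (hm₃ : Measurable V₃)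
    (hindep : iIndepFun ![V₁, V₂, V₃] μ)
    (hcdf₁ : ∀ x : ℕ, μ.real (V₁ ⁻¹' Set.Iic x) = edwCDF α p β₁ x)
    (hcdf₂ : ∀ x : ℕ, μ.real (V₂ ⁻¹' Set.Iic x) = edwCDF α p β₂ x)
    (hcdf₃ : ∀ x : ℕ, μ.real (V₃ ⁻¹' Set.Iic x) = edwCDF α p β₃ x) {x₁ x₂ : ℕ} (h : x₂ ≤ x₁) :
    μ.real {ω | max (V₁ ω) (V₃ ω) ≤ x₁ ∧ max (V₂ ω) (V₃ ω) = x₂} =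
      edwCDF α p β₁ x₁ * edwPMF α p (β₂ + β₃) x₂ := by
  have hset : {ω | max (V₁ ω) (V₃ ω) ≤ x₁ ∧ max (V₂ ω) (V₃ ω) = x₂} =
      V₁ ⁻¹' Set.Iic x₁ ∩ {ω | max (V₂ ω) (V₃ ω) = x₂} :=
    Set.ext fun ω => max_le_and_max_eq_iff_of_le h
  rw [hset, measureReal_preimage_inter_max_eq hp0 hp1 hα hβ hm₂ hm₃ hindep hcdf₂ hcdf₃, hcdf₁]

end BDEW

theorem bdew_conditional_cdf_eq_general
    {Ω : Type*} [MeasurableSpace Ω] (μ : Measure Ω) [IsProbabilityMeasure μ]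
    (α p β₁ β₂ β₃ : ℝ)
    (hp0 : 0 < p) (hp1 : p < 1) (hα : 0 < α)
    (hβ₂ : 0 < β₂) (hβ₃ : 0 < β₃)
    (V₁ V₂ V₃ : Ω → ℕ)
    (hm₂ : Measurable V₂) (hm₃ : Measurable V₃)
    (hindep : iIndepFun ![V₁, V₂, V₃] μ)
    (hcdf₁ : ∀ x : ℕ, (μ {ω | V₁ ω ≤ x}).toReal = edwCDF α p β₁ x)
    (hcdf₂ : ∀ x : ℕ, (μ {ω | V₂ ω ≤ x}).toReal = edwCDF α p β₂ x)
    (hcdf₃ : ∀ x : ℕ, (μ {ω | V₃ ω ≤ x}).toReal = edwCDF α p β₃ x) :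
    ∀ x₁ x₂ : ℕ,
      (x₁ < x₂ →
        (μ {ω | max (V₁ ω) (V₃ ω) ≤ x₁ ∧ max (V₂ ω) (V₃ ω) = x₂}).toReal /
            (μ {ω | max (V₂ ω) (V₃ ω) = x₂}).toReal =
          edwCDF α p (β₁ + β₃) x₁ * edwPMF α p β₂ x₂ / edwPMF α p (β₂ + β₃) x₂) ∧
      (x₂ < x₁ →
        (μ {ω | max (V₁ ω) (V₃ ω) ≤ x₁ ∧ max (V₂ ω) (V₃ ω) = x₂}).toReal /
            (μ {ω | max (V₂ ω) (V₃ ω) = x₂}).toReal =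
          edwCDF α p β₁ x₁) ∧
      (x₁ = x₂ →
        (μ {ω | max (V₁ ω) (V₃ ω) ≤ x₁ ∧ max (V₂ ω) (V₃ ω) = x₂}).toReal /
            (μ {ω | max (V₂ ω) (V₃ ω) = x₂}).toReal =
          (edwCDF α p (β₁ + β₂ + β₃) x₁ -
              edwCDF α p β₁ x₁ * (1 - p ^ ((x₁ : ℝ) ^ α)) ^ (β₂ + β₃)) /
            edwPMF α p (β₂ + β₃) x₁) := by
  have hβ : 0 < β₂ + β₃ := add_pos hβ₂ hβ₃
  intro x₁ x₂
  simp only [← measureReal_def]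
  rw [measureReal_max_eq hp0.le hp1 hα hβ.ne' hm₂ hm₃ hindep hcdf₂ hcdf₃]
  refine ⟨fun h => ?_, fun h => ?_, fun h => ?_⟩
  · rw [measureReal_max_le_and_max_eq_of_lt hp0.le hp1 hα hβ₂.ne' hm₂ hindep hcdf₁ hcdf₂ hcdf₃ h]
  · rw [measureReal_max_le_and_max_eq_of_le hp0.le hp1 hα hβ.ne' hm₂ hm₃ hindep hcdf₁ hcdf₂ hcdf₃
      h.le, mul_div_cancel_right₀ _ (edwPMF_pos hp0 hp1 hα hβ x₂).ne']
  · subst h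
    rw [measureReal_max_le_and_max_eq_of_le hp0.le hp1 hα hβ.ne' hm₂ hm₃ hindep hcdf₁ hcdf₂ hcdf₃
      le_rfl, add_assoc, edwCDF_add hp0.le hp1, ← mul_sub]
    rfl

/-- The conditional CDF of `X₁` given `X₂ = x₂` for the BDEW distribution.
In case (iii) the term `F_EDW(x-1; β₂+β₃) = (1 - p^(x^α))^(β₂+β₃)`, which is `0` when `x = 0`
(since `p^(0^α) = 1` for `α > 0`). -/
theorem bdew_conditional_cdf_eq
    {Ω : Type*} [MeasurableSpace Ω] (μ : Measure Ω) [IsProbabilityMeasure μ]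
    (α p β₁ β₂ β₃ : ℝ)
    (hp0 : 0 < p) (hp1 : p < 1) (hα : 0 < α)
    (hβ₁ : 0 < β₁) (hβ₂ : 0 < β₂) (hβ₃ : 0 < β₃)
    (V₁ V₂ V₃ : Ω → ℕ)
    (hm₁ : Measurable V₁) (hm₂ : Measurable V₂) (hm₃ : Measurable V₃)
    (hindep : iIndepFun ![V₁, V₂, V₃] μ)
    (hcdf₁ : ∀ x : ℕ, (μ {ω | V₁ ω ≤ x}).toReal = edwCDF α p β₁ x)
    (hcdf₂ : ∀ x : ℕ, (μ {ω | V₂ ω ≤ x}).toReal = edwCDF α p β₂ x)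
    (hcdf₃ : ∀ x : ℕ, (μ {ω | V₃ ω ≤ x}).toReal = edwCDF α p β₃ x) :
    ∀ x₁ x₂ : ℕ,
      (x₁ < x₂ →
        (μ {ω | max (V₁ ω) (V₃ ω) ≤ x₁ ∧ max (V₂ ω) (V₃ ω) = x₂}).toReal /
            (μ {ω | max (V₂ ω) (V₃ ω) = x₂}).toReal =
          edwCDF α p (β₁ + β₃) x₁ * edwPMF α p β₂ x₂ / edwPMF α p (β₂ + β₃) x₂) ∧
      (x₂ < x₁ →
        (μ {ω | max (V₁ ω) (V₃ ω) ≤ x₁ ∧ max (V₂ ω) (V₃ ω) = x₂}).toReal /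
            (μ {ω | max (V₂ ω) (V₃ ω) = x₂}).toReal =
          edwCDF α p β₁ x₁) ∧
      (x₁ = x₂ →
        (μ {ω | max (V₁ ω) (V₃ ω) ≤ x₁ ∧ max (V₂ ω) (V₃ ω) = x₂}).toReal /
            (μ {ω | max (V₂ ω) (V₃ ω) = x₂}).toReal =
          (edwCDF α p (β₁ + β₂ + β₃) x₁ -
              edwCDF α p β₁ x₁ * (1 - p ^ ((x₁ : ℝ) ^ α)) ^ (β₂ + β₃)) /
            edwPMF α p (β₂ + β₃) x₁) :=
  bdew_conditional_cdf_eq_general μ α p β₁ β₂ β₃ hp0 hp1 hα hβ₂ hβ₃ V₁ V₂ V₃ hm₂ hm₃ hindep hcdf₁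
    hcdf₂ hcdf₃
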